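/- For real numbers q_1, q_2, q_3, the integral I(q) = ∫_{ℝ} dr / (cosh(r − q_1)·cosh(r − q_2)·cosh(r − q_3)) equals π / (2·∏_{1 ≤ j < k ≤ 3} cosh((q_j − q_k)/2)). -/

import Mathlib

open MeasureTheory

/-!
For pairwise distinct `qᵢ` the integrand has a partial fraction decomposition
`1 / (c₁ c₂ c₃) = (s₁₃ / c₂ - s₂₃ / c₁ - s₁₂ / c₃) / (s₁₂ s₁₃ s₂₃)` with `cᵢ = cosh (r - qᵢ)` and
`sᵢⱼ = sinh (qᵢ - qⱼ)`. Each `1 / cᵢ` integrates to `π` (an antiderivative is `arctan ∘ sinh`), and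
the half-angle identity `s₁₃ - s₂₃ - s₁₂ = 4 ∏ sinh ((qᵢ - qⱼ) / 2)` turns the coefficient into
`1 / (2 ∏ cosh ((qᵢ - qⱼ) / 2))`. Both sides are continuous in `q` (dominated convergence, with the
bound `1 / c₁ ≤ 2 e^{|q₁|} e^{-|r|}`), so the identity extends to coinciding `qᵢ` by perturbing
`q` along a line that meets the diagonals only finitely often.
-/

open Real Filter

theorem integrable_exp_neg_abs : Integrable fun x : ℝ => exp (-|x|) := by
  rw [← integrableOn_univ, ← Set.Iic_union_Ioi (a := (0 : ℝ)), integrableOn_union]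
  constructor
  · exact (integrableOn_exp_Iic 0).congr_fun
      (fun x hx => by rw [abs_of_nonpos hx, neg_neg]) measurableSet_Iic
  · exact (exp_neg_integrableOn_Ioi 0 one_pos).congr_fun
      (fun x hx => by simp [abs_of_pos (Set.mem_Ioi.mp hx)]) measurableSet_Ioi

theorem exp_abs_le_two_mul_cosh (x : ℝ) : exp |x| ≤ 2 * cosh x := by
  rw [cosh_eq]
  rcases abs_cases x with ⟨h, _⟩ | ⟨h, _⟩ <;> rw [h] <;> linarith [exp_pos x, exp_pos (-x)]

theorem one_div_cosh_sub_le (r q : ℝ) : 1 / cosh (r - q) ≤ 2 * exp |q| * exp (-|r|) := by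
  have hcosh : 1 / cosh (r - q) ≤ 2 * exp (-|r - q|) := by
    rw [exp_neg, ← div_eq_mul_inv, div_le_div_iff₀ (cosh_pos _) (exp_pos _)]
    linarith [exp_abs_le_two_mul_cosh (r - q)]
  have hexp : exp (-|r - q|) ≤ exp |q| * exp (-|r|) := by
    rw [← exp_add, exp_le_exp]
    linarith [abs_sub_abs_le_abs_sub r q]
  linarith

theorem integrable_one_div_cosh_sub (q : ℝ) : Integrable fun r : ℝ => 1 / cosh (r - q) := by
  refine (integrable_exp_neg_abs.const_mul (2 * exp |q|)).mono'
    (continuous_const.div (by fun_prop) fun r => by positivity).aestronglyMeasurable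
    (Eventually.of_forall fun r => ?_)
  rw [norm_of_nonneg (by positivity)]
  exact one_div_cosh_sub_le r q

theorem hasDerivAt_arctan_sinh (x : ℝ) : HasDerivAt (fun x => arctan (sinh x)) (1 / cosh x) x := by
  convert (hasDerivAt_sinh x).arctan using 1
  rw [← cosh_sq']
  field_simp [(cosh_pos x).ne']

theorem integral_one_div_cosh_sub (q : ℝ) : ∫ r : ℝ, 1 / cosh (r - q) = π := by
  rw [integral_sub_right_eq_self (fun r => 1 / cosh r),
    integral_of_hasDerivAt_of_tendsto hasDerivAt_arctan_sinh
      (by simpa using integrable_one_div_cosh_sub 0)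
      ((tendsto_arctan_atBot.mono_right nhdsWithin_le_nhds).comp sinhOrderIso.tendsto_atBot)
      ((tendsto_arctan_atTop.mono_right nhdsWithin_le_nhds).comp sinhOrderIso.tendsto_atTop)]
  ring

theorem sinh_mul_sinh_mul_sinh_eq (q₁ q₂ q₃ r : ℝ) :
    sinh (q₁ - q₂) * sinh (q₁ - q₃) * sinh (q₂ - q₃) =
      sinh (q₁ - q₃) * cosh (r - q₁) * cosh (r - q₃)
        - sinh (q₂ - q₃) * cosh (r - q₂) * cosh (r - q₃)
        - sinh (q₁ - q₂) * cosh (r - q₁) * cosh (r - q₂) := by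
  simp only [sinh_eq, cosh_eq, exp_sub, exp_neg]
  field_simp
  ring

theorem one_div_cosh_mul_cosh_mul_cosh_eq {q₁ q₂ q₃ : ℝ}
    (hS : sinh (q₁ - q₂) * sinh (q₁ - q₃) * sinh (q₂ - q₃) ≠ 0) (r : ℝ) :
    1 / (cosh (r - q₁) * cosh (r - q₂) * cosh (r - q₃)) =
      (sinh (q₁ - q₃) * (1 / cosh (r - q₂)) - sinh (q₂ - q₃) * (1 / cosh (r - q₁))
        - sinh (q₁ - q₂) * (1 / cosh (r - q₃))) /
        (sinh (q₁ - q₂) * sinh (q₁ - q₃) * sinh (q₂ - q₃)) := by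
  rw [eq_div_iff hS, sinh_mul_sinh_mul_sinh_eq q₁ q₂ q₃ r]
  field_simp [(cosh_pos (r - q₁)).ne', (cosh_pos (r - q₂)).ne', (cosh_pos (r - q₃)).ne']

theorem sinh_sub_sub_sinh_sub_sub_sinh_sub (a b c : ℝ) :
    sinh (a - c) - sinh (b - c) - sinh (a - b) =
      4 * sinh ((a - b) / 2) * sinh ((a - c) / 2) * sinh ((b - c) / 2) := by
  have hsq : ∀ x : ℝ, exp x = exp (x / 2) ^ 2 := fun x => by rw [← exp_nat_mul]; ring_nf
  simp only [sinh_eq, sub_div, exp_neg, exp_sub]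
  rw [hsq a, hsq b, hsq c]
  field_simp
  ring

theorem sinh_eq_two_mul_sinh_half_mul_cosh_half (x : ℝ) :
    sinh x = 2 * sinh (x / 2) * cosh (x / 2) := by
  rw [← sinh_two_mul, mul_div_cancel₀ _ two_ne_zero]

theorem sinh_sub_sub_sinh_sub_sub_sinh_sub_div {q₁ q₂ q₃ : ℝ}
    (h₁₂ : q₁ ≠ q₂) (h₁₃ : q₁ ≠ q₃) (h₂₃ : q₂ ≠ q₃) :
    (sinh (q₁ - q₃) - sinh (q₂ - q₃) - sinh (q₁ - q₂)) /
        (sinh (q₁ - q₂) * sinh (q₁ - q₃) * sinh (q₂ - q₃))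
      = 1 / (2 * (cosh ((q₁ - q₂) / 2) * cosh ((q₁ - q₃) / 2) * cosh ((q₂ - q₃) / 2))) := by
  have hs : ∀ {a b : ℝ}, a ≠ b → sinh ((a - b) / 2) ≠ 0 := fun h => by simpa [sub_eq_zero] using h
  rw [sinh_sub_sub_sinh_sub_sub_sinh_sub, sinh_eq_two_mul_sinh_half_mul_cosh_half (q₁ - q₂),
    sinh_eq_two_mul_sinh_half_mul_cosh_half (q₁ - q₃),
    sinh_eq_two_mul_sinh_half_mul_cosh_half (q₂ - q₃)]
  field_simp [hs h₁₂, hs h₁₃, hs h₂₃]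
  ring

theorem integral_one_div_cosh_mul_cosh_mul_cosh_of_ne {q₁ q₂ q₃ : ℝ}
    (h₁₂ : q₁ ≠ q₂) (h₁₃ : q₁ ≠ q₃) (h₂₃ : q₂ ≠ q₃) :
    ∫ r : ℝ, 1 / (cosh (r - q₁) * cosh (r - q₂) * cosh (r - q₃))
      = π / (2 * (cosh ((q₁ - q₂) / 2) * cosh ((q₁ - q₃) / 2) * cosh ((q₂ - q₃) / 2))) := by
  have hS : sinh (q₁ - q₂) * sinh (q₁ - q₃) * sinh (q₂ - q₃) ≠ 0 := by
    simp [sub_eq_zero, h₁₂, h₁₃, h₂₃]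
  have hint (a q : ℝ) : Integrable fun r : ℝ => a * (1 / cosh (r - q)) :=
    (integrable_one_div_cosh_sub q).const_mul a
  simp_rw [one_div_cosh_mul_cosh_mul_cosh_eq hS]
  rw [integral_div, integral_sub ((hint _ _).sub' (hint _ _)) (hint _ _),
    integral_sub (hint _ _) (hint _ _), integral_const_mul, integral_const_mul, integral_const_mul,
    integral_one_div_cosh_sub, integral_one_div_cosh_sub, integral_one_div_cosh_sub,
    div_eq_mul_one_div π, ← sinh_sub_sub_sinh_sub_sub_sinh_sub_div h₁₂ h₁₃ h₂₃]
  ring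

theorem continuous_integral_one_div_cosh_mul_cosh_mul_cosh :
    Continuous fun q : ℝ × ℝ × ℝ =>
      ∫ r : ℝ, 1 / (cosh (r - q.1) * cosh (r - q.2.1) * cosh (r - q.2.2)) := by
  refine continuous_iff_continuousAt.2 fun p => continuousAt_of_dominated
    (bound := fun r => 2 * exp (|p.1| + 1) * exp (-|r|))
    (Eventually.of_forall fun q =>
      (continuous_const.div (by fun_prop) fun r => by positivity).aestronglyMeasurable)
    ?_ (integrable_exp_neg_abs.const_mul _)
    (Eventually.of_forall fun r =>
      (continuous_const.div (by fun_prop) fun q => by positivity).continuousAt)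
  filter_upwards [(continuous_fst.abs.tendsto p).eventually (eventually_lt_nhds (lt_add_one _))]
    with q hq
  refine Eventually.of_forall fun r => ?_
  have hc₁ := cosh_pos (r - q.1)
  rw [norm_of_nonneg (by positivity)]
  calc 1 / (cosh (r - q.1) * cosh (r - q.2.1) * cosh (r - q.2.2))
      ≤ 1 / cosh (r - q.1) := by
        gcongr
        rw [mul_assoc]
        exact le_mul_of_one_le_right hc₁.le
          (one_le_mul_of_one_le_of_one_le (one_le_cosh _) (one_le_cosh _))
    _ ≤ 2 * exp |q.1| * exp (-|r|) := one_div_cosh_sub_le r q.1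
    _ ≤ 2 * exp (|p.1| + 1) * exp (-|r|) := by gcongr

/-- `∫ dr / (cosh(r−q₁)cosh(r−q₂)cosh(r−q₃)) = π / (2 ∏_{j<k} cosh((q_j−q_k)/2))`. -/
theorem integral_inv_cosh_three (q₁ q₂ q₃ : ℝ) :
    ∫ r : ℝ, 1 / (Real.cosh (r - q₁) * Real.cosh (r - q₂) * Real.cosh (r - q₃))
      = Real.pi / (2 * (Real.cosh ((q₁ - q₂) / 2) * Real.cosh ((q₁ - q₃) / 2) *
          Real.cosh ((q₂ - q₃) / 2))) := by
  have hrhs : Continuous fun q : ℝ × ℝ × ℝ =>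
      π / (2 * (cosh ((q.1 - q.2.1) / 2) * cosh ((q.1 - q.2.2) / 2) *
        cosh ((q.2.1 - q.2.2) / 2))) :=
    continuous_const.div (by fun_prop) fun q => by positivity
  let path (t : ℝ) : ℝ × ℝ × ℝ := (q₁, q₂ + t, q₃ + 2 * t)
  have hpath : Continuous path := by fun_prop
  have hbad : {t : ℝ | q₁ = q₂ + t ∨ q₁ = q₃ + 2 * t ∨ q₂ + t = q₃ + 2 * t}.Countable := by
    refine (Set.toFinite {q₁ - q₂, (q₁ - q₃) / 2, q₂ - q₃}).countable.mono ?_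
    rintro t (h | h | h)
    · exact Or.inl (by linarith)
    · exact Or.inr (Or.inl (by linarith))
    · exact Or.inr (Or.inr (Set.mem_singleton_iff.2 (by linarith)))
  have hext := Continuous.ext_on (hbad.dense_compl ℝ)
    (continuous_integral_one_div_cosh_mul_cosh_mul_cosh.comp hpath) (hrhs.comp hpath)
    fun t ht => by
      obtain ⟨h₁₂, h₁₃, h₂₃⟩ : _ ∧ _ ∧ _ := by
        simpa only [Set.mem_compl_iff, Set.mem_ofPred_eq, not_or] using ht
      exact integral_one_div_cosh_mul_cosh_mul_cosh_of_ne h₁₂ h₁₃ h₂₃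
  simpa [path] using congrFun hext 0
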